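/- arXiv:2410.10485 — 2 statements merged into one kernel-verified Lean document; each statement's English description precedes it below -/
import Mathlib

section
/- The total correlation decomposes as TC(X) = Σ_{k=1}^{n−1} (n−k)·u_k(X). -/
open MeasureTheory Finset

noncomputable section

variable {Ω : Type*} [MeasurableSpace Ω]

/-- Shannon entropy of a finite-valued random variable `Z` under the measure `μ`
(with the convention that the entropy of an empty tuple is `negMulLog (μ univ) = 0`
for a probability measure). -/
def ent {α : Type*} [Fintype α] (μ : Measure Ω) (Z : Ω → α) : ℝ :=
  ∑ z : α, Real.negMulLog ((μ (Z ⁻¹' {z})).toReal)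

/-- Conditional entropy `H(A | B)`. -/
def condEnt {α β : Type*} [Fintype α] [Fintype β] (μ : Measure Ω)
    (A : Ω → α) (B : Ω → β) : ℝ :=
  ent μ (fun ω => (A ω, B ω)) - ent μ B

/-- Mutual information `I(A ; B)`. -/
def mi {α β : Type*} [Fintype α] [Fintype β] (μ : Measure Ω)
    (A : Ω → α) (B : Ω → β) : ℝ :=
  ent μ A + ent μ B - ent μ (fun ω => (A ω, B ω))

/-- Conditional mutual information `I(A ; B | C)`. -/
def cmi {α β γ : Type*} [Fintype α] [Fintype β] [Fintype γ] (μ : Measure Ω)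
    (A : Ω → α) (B : Ω → β) (C : Ω → γ) : ℝ :=
  ent μ (fun ω => (A ω, C ω)) + ent μ (fun ω => (B ω, C ω))
    - ent μ (fun ω => (A ω, B ω, C ω)) - ent μ C

/-- The sub-tuple `X^a = (X_i)_{i ∈ a}` of the random vector `X = (X_1, …, X_n)`. -/
def restr {n : ℕ} {S : Type*} (X : Fin n → Ω → S) (a : Finset (Fin n)) :
    Ω → (a → S) :=
  fun ω i => X i.1 ω

/-- Average subset entropy `r_k(X) = C(n,k)⁻¹ ∑_{|a| = k} H(X^a)`. -/
def rE {n : ℕ} {S : Type*} [Fintype S] (μ : Measure Ω) (X : Fin n → Ω → S) (k : ℕ) : ℝ :=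
  ((n.choose k : ℝ))⁻¹ *
    ∑ a ∈ univ.powerset.filter (fun a : Finset (Fin n) => a.card = k), ent μ (restr X a)

/-- Average conditional pairwise mutual information
`u_k(X) = (C(n,k+1) C(k+1,2))⁻¹ ∑_{i<j} ∑_{|a| = k-1, i,j ∉ a} I(X_i ; X_j | X^a)`. -/
def uI {n : ℕ} {S : Type*} [Fintype S] (μ : Measure Ω) (X : Fin n → Ω → S) (k : ℕ) : ℝ :=
  ((n.choose (k + 1) : ℝ) * ((k + 1).choose 2 : ℝ))⁻¹ *
    ∑ p ∈ univ.filter (fun p : Fin n × Fin n => p.1 < p.2),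
      ∑ a ∈ (univ \ ({p.1, p.2} : Finset (Fin n))).powerset.filter
          (fun a : Finset (Fin n) => a.card = k - 1),
        cmi μ (X p.1) (X p.2) (restr X a)

lemma ent_comp_equiv {α β : Type*} [Fintype α] [Fintype β] (μ : Measure Ω)
    (e : α ≃ β) (Z : Ω → α) : ent μ (fun ω => e (Z ω)) = ent μ Z := by
  unfold ent
  rw [← Equiv.sum_comp e]
  refine Finset.sum_congr rfl fun a _ => ?_
  have : (fun ω => e (Z ω)) ⁻¹' {e a} = Z ⁻¹' {a} := by
    ext ω; simp [e.injective.eq_iff]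
  rw [this]

def insertEquiv {n : ℕ} (S : Type*) (i : Fin n) (a : Finset (Fin n)) (h : i ∉ a) :
    (↥(insert i a) → S) ≃ S × (↥a → S) where
  toFun f := (f ⟨i, mem_insert_self i a⟩, fun j => f ⟨j.1, mem_insert_of_mem j.2⟩)
  invFun p := fun j => if hj : j.1 = i then p.1 else p.2 ⟨j.1, by
    rcases mem_insert.mp j.2 with h' | h'
    · exact absurd h' hj
    · exact h'⟩
  left_inv f := by
    funext j
    by_cases hj : j.1 = i
    · simp only [dif_pos hj]
      congr 1
      exact Subtype.ext hj.symm
    · simp only [dif_neg hj]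
  right_inv p := by
    refine Prod.ext (by simp) ?_
    funext j
    have hj : j.1 ≠ i := fun h' => h (h' ▸ j.2)
    simp only [dif_neg hj]

lemma ent_pair_insert {n : ℕ} {S : Type*} [Fintype S] (μ : Measure Ω)
    (X : Fin n → Ω → S) {i : Fin n} {a : Finset (Fin n)} (h : i ∉ a) :
    ent μ (fun ω => (X i ω, restr X a ω)) = ent μ (restr X (insert i a)) := by
  have : (fun ω => (X i ω, restr X a ω))
      = fun ω => insertEquiv S i a h (restr X (insert i a) ω) := rfl
  rw [this, ent_comp_equiv]

lemma ent_triple_insert {n : ℕ} {S : Type*} [Fintype S] (μ : Measure Ω)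
    (X : Fin n → Ω → S) {i j : Fin n} {a : Finset (Fin n)} (hij : i ≠ j)
    (hi : i ∉ a) (hj : j ∉ a) :
    ent μ (fun ω => (X i ω, X j ω, restr X a ω))
      = ent μ (restr X (insert i (insert j a))) := by
  have hi' : i ∉ insert j a := by simp [hij, hi]
  have : (fun ω => (X i ω, X j ω, restr X a ω))
      = fun ω => ((Equiv.refl S).prodCongr (insertEquiv S j a hj))
          ((fun ω => (X i ω, restr X (insert j a) ω)) ω) := rfl
  rw [this, ent_comp_equiv, ent_pair_insert μ X hi']

lemma cmi_restr_eq {n : ℕ} {S : Type*} [Fintype S] (μ : Measure Ω)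
    (X : Fin n → Ω → S) {i j : Fin n} {a : Finset (Fin n)} (hij : i ≠ j)
    (hi : i ∉ a) (hj : j ∉ a) :
    cmi μ (X i) (X j) (restr X a)
      = ent μ (restr X (insert i a)) + ent μ (restr X (insert j a))
        - ent μ (restr X (insert i (insert j a))) - ent μ (restr X a) := by
  unfold cmi
  rw [ent_pair_insert μ X hi, ent_pair_insert μ X hj, ent_triple_insert μ X hij hi hj]

lemma sum_double_count {ι κ γ : Type*} [DecidableEq γ] (D : Finset ι) (A : ι → Finset κ)
    (B : Finset γ) (T : γ → Finset ι) (g : ι → κ → γ) (h : ι → γ → κ)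
    (F : γ → ℝ)
    (h1 : ∀ p ∈ D, ∀ a ∈ A p, g p a ∈ B)
    (h2 : ∀ p ∈ D, ∀ a ∈ A p, p ∈ T (g p a))
    (h3 : ∀ b ∈ B, ∀ p ∈ T b, p ∈ D)
    (h4 : ∀ b ∈ B, ∀ p ∈ T b, h p b ∈ A p)
    (h5 : ∀ p ∈ D, ∀ a ∈ A p, h p (g p a) = a)
    (h6 : ∀ b ∈ B, ∀ p ∈ T b, g p (h p b) = b) :
    ∑ p ∈ D, ∑ a ∈ A p, F (g p a) = ∑ b ∈ B, ((T b).card : ℝ) * F b := by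
  rw [Finset.sum_sigma' D A (fun p a => F (g p a))]
  have : ∀ b ∈ B, ((T b).card : ℝ) * F b = ∑ _p ∈ T b, F b := by
    intro b _; rw [Finset.sum_const, nsmul_eq_mul]
  rw [Finset.sum_congr rfl this, Finset.sum_sigma' B T (fun b _ => F b)]
  refine Finset.sum_nbij' (fun x => ⟨g x.1 x.2, x.1⟩) (fun y => ⟨y.2, h y.2 y.1⟩)
    ?_ ?_ ?_ ?_ ?_
  · rintro ⟨p, a⟩ hx
    rw [Finset.mem_sigma] at hx ⊢
    exact ⟨h1 p hx.1 a hx.2, h2 p hx.1 a hx.2⟩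
  · rintro ⟨b, p⟩ hy
    rw [Finset.mem_sigma] at hy ⊢
    exact ⟨h3 b hy.1 p hy.2, h4 b hy.1 p hy.2⟩
  · rintro ⟨p, a⟩ hx
    rw [Finset.mem_sigma] at hx
    exact Sigma.ext rfl (heq_of_eq (h5 p hx.1 a hx.2))
  · rintro ⟨b, p⟩ hy
    rw [Finset.mem_sigma] at hy
    exact Sigma.ext (h6 b hy.1 p hy.2) (by simp)
  · rintro ⟨p, a⟩ _; rfl

section Counting
variable {n : ℕ}

/-- the pair set with `p.1 < p.2` -/
def PLT (n : ℕ) : Finset (Fin n × Fin n) := univ.filter (fun p => p.1 < p.2)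
/-- the pair set with `p.1 ≠ p.2` -/
def PNE (n : ℕ) : Finset (Fin n × Fin n) := univ.filter (fun p => p.1 ≠ p.2)
/-- admissible `a`'s for a pair `p` -/
def AP (n k : ℕ) (p : Fin n × Fin n) : Finset (Finset (Fin n)) :=
  (univ \ ({p.1, p.2} : Finset (Fin n))).powerset.filter (fun a => a.card = k - 1)

lemma mem_AP {k : ℕ} {p : Fin n × Fin n} {a : Finset (Fin n)} :
    a ∈ AP n k p ↔ (p.1 ∉ a ∧ p.2 ∉ a) ∧ a.card = k - 1 := by
  simp only [AP, mem_filter, mem_powerset]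
  constructor
  · rintro ⟨hs, hc⟩
    refine ⟨⟨fun hm => ?_, fun hm => ?_⟩, hc⟩
    · have := hs hm; simp at this
    · have := hs hm; simp at this
  · rintro ⟨⟨ha1, ha2⟩, hc⟩
    refine ⟨fun x hx => ?_, hc⟩
    simp only [mem_sdiff, mem_univ, true_and, mem_insert, mem_singleton]
    push_neg
    exact ⟨fun h' => ha1 (h' ▸ hx), fun h' => ha2 (h' ▸ hx)⟩

lemma sum_PLT_of_symm (f : Fin n × Fin n → ℝ) (hf : ∀ p, f p.swap = f p) :
    2 * ∑ p ∈ PLT n, f p = ∑ p ∈ PNE n, f p := by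
  have hsplit : PNE n = PLT n ∪ (univ.filter (fun p : Fin n × Fin n => p.2 < p.1)) := by
    ext p
    simp only [PNE, PLT, mem_union, mem_filter, mem_univ, true_and]
    constructor
    · intro h; exact lt_or_gt_of_ne h
    · rintro (h | h); exacts [ne_of_lt h, ne_of_gt h]
  have hdisj : Disjoint (PLT n) (univ.filter (fun p : Fin n × Fin n => p.2 < p.1)) := by
    rw [Finset.disjoint_left]
    intro p hp hq
    simp only [PLT, mem_filter, mem_univ, true_and] at hp
    simp only [mem_filter, mem_univ, true_and] at hq
    exact absurd hq (not_lt_of_gt hp)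
  have hswap : ∑ p ∈ univ.filter (fun p : Fin n × Fin n => p.2 < p.1), f p
      = ∑ p ∈ PLT n, f p := by
    refine Finset.sum_nbij' Prod.swap Prod.swap ?_ ?_ ?_ ?_ ?_
    · intro p hp
      simp only [mem_filter, mem_univ, true_and] at hp
      simp [PLT, hp]
    · intro p hp
      simp only [PLT, mem_filter, mem_univ, true_and] at hp
      simp [hp]
    · intro p _; rfl
    · intro p _; rfl
    · intro p _; exact (hf p).symm
  rw [hsplit, Finset.sum_union hdisj, hswap, two_mul]

lemma nat_sq_sub (m : ℕ) : m * m - m = m * (m - 1) := by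
  cases m with
  | zero => simp
  | succ m' => rw [Nat.succ_sub_one, Nat.mul_succ, Nat.add_sub_cancel]

lemma two_mul_choose_two (m : ℕ) : 2 * m.choose 2 = m * (m - 1) := by
  induction m with
  | zero => simp
  | succ m' ih =>
    rw [Nat.choose_succ_succ, Nat.mul_add, ih, Nat.succ_sub_one, Nat.choose_one_right]
    cases m' with
    | zero => simp
    | succ m'' =>
      rw [Nat.succ_sub_one, Nat.succ_mul, Nat.mul_succ]
      ring

variable {k : ℕ} (F : Finset (Fin n) → ℝ)

lemma countA (hk : 1 ≤ k) (hkn : k ≤ n) :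
    ∑ p ∈ PNE n, ∑ a ∈ AP n k p, F a
      = (((n - k + 1) * (n - k) : ℕ) : ℝ) * ∑ b ∈ powersetCard (k-1) univ, F b := by
  rw [sum_double_count (PNE n) (AP n k) (powersetCard (k-1) univ)
    (fun b => (bᶜ).offDiag) (fun _ a => a) (fun _ b => b) F]
  · rw [Finset.mul_sum]
    refine Finset.sum_congr rfl fun b hb => ?_
    rw [mem_powersetCard] at hb
    have hbc : (bᶜ).card = n - (k - 1) := by
      rw [card_compl, hb.2, Fintype.card_fin]
    rw [offDiag_card, hbc, nat_sq_sub]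
    have h2 : n - (k - 1) - 1 = n - k := by omega
    have h1 : n - (k - 1) = n - k + 1 := by omega
    rw [h2, h1]
  · intro p _ a ha
    rw [mem_AP] at ha
    exact mem_powersetCard.mpr ⟨subset_univ a, ha.2⟩
  · intro p hp a ha
    rw [mem_AP] at ha
    simp only [PNE, mem_filter, mem_univ, true_and] at hp
    exact mem_offDiag.mpr ⟨mem_compl.mpr ha.1.1, mem_compl.mpr ha.1.2, hp⟩
  · intro b _ p hp
    rw [mem_offDiag] at hp
    simp only [PNE, mem_filter, mem_univ, true_and]
    exact hp.2.2
  · intro b hb p hp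
    rw [mem_offDiag] at hp
    rw [mem_powersetCard] at hb
    exact mem_AP.mpr ⟨⟨mem_compl.mp hp.1, mem_compl.mp hp.2.1⟩, hb.2⟩
  · intro p _ a _; rfl
  · intro b _ p _; rfl

lemma countB (hk : 1 ≤ k) (hkn : k + 1 ≤ n) :
    ∑ p ∈ PNE n, ∑ a ∈ AP n k p, F (insert p.1 (insert p.2 a))
      = (((k + 1) * k : ℕ) : ℝ) * ∑ b ∈ powersetCard (k+1) univ, F b := by
  rw [sum_double_count (PNE n) (AP n k) (powersetCard (k+1) univ)
    (fun b => b.offDiag) (fun p a => insert p.1 (insert p.2 a))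
    (fun p b => b \ {p.1, p.2}) F]
  · rw [Finset.mul_sum]
    refine Finset.sum_congr rfl fun b hb => ?_
    rw [mem_powersetCard] at hb
    rw [offDiag_card, hb.2, nat_sq_sub]
    norm_num
  · intro p hp a ha
    rw [mem_AP] at ha
    simp only [PNE, mem_filter, mem_univ, true_and] at hp
    refine mem_powersetCard.mpr ⟨subset_univ _, ?_⟩
    rw [card_insert_of_notMem (by simp [hp, ha.1.1]),
      card_insert_of_notMem ha.1.2, ha.2]
    omega
  · intro p hp a _
    simp only [PNE, mem_filter, mem_univ, true_and] at hp
    exact mem_offDiag.mpr ⟨mem_insert_self _ _,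
      mem_insert_of_mem (mem_insert_self _ _), hp⟩
  · intro b _ p hp
    rw [mem_offDiag] at hp
    simp only [PNE, mem_filter, mem_univ, true_and]
    exact hp.2.2
  · intro b hb p hp
    rw [mem_offDiag] at hp
    rw [mem_powersetCard] at hb
    refine mem_AP.mpr ⟨⟨by simp, by simp⟩, ?_⟩
    rw [card_sdiff_of_subset (by
      intro x hx
      simp only [mem_insert, mem_singleton] at hx
      rcases hx with rfl | rfl
      exacts [hp.1, hp.2.1])]
    rw [hb.2, card_pair hp.2.2]
    omega
  · intro p hp a ha
    rw [mem_AP] at ha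
    ext x
    simp only [mem_sdiff, mem_insert, mem_singleton]
    constructor
    · rintro ⟨rfl | rfl | hx, hne⟩
      · exact absurd rfl (by push_neg at hne; exact hne.1)
      · exact absurd rfl (by push_neg at hne; exact hne.2)
      · exact hx
    · intro hx
      refine ⟨Or.inr (Or.inr hx), ?_⟩
      push_neg
      exact ⟨fun h' => ha.1.1 (h' ▸ hx), fun h' => ha.1.2 (h' ▸ hx)⟩
  · intro b _ p hp
    rw [mem_offDiag] at hp
    ext x
    simp only [mem_insert, mem_sdiff, mem_singleton]
    constructor
    · rintro (rfl | rfl | ⟨hx, _⟩)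
      exacts [hp.1, hp.2.1, hx]
    · intro hx
      by_cases h1 : x = p.1
      · exact Or.inl h1
      · by_cases h2 : x = p.2
        · exact Or.inr (Or.inl h2)
        · exact Or.inr (Or.inr ⟨hx, by push_neg; exact ⟨h1, h2⟩⟩)

lemma countC1 (hk : 1 ≤ k) (hkn : k ≤ n) :
    ∑ p ∈ PNE n, ∑ a ∈ AP n k p, F (insert p.1 a)
      = ((k * (n - k) : ℕ) : ℝ) * ∑ b ∈ powersetCard k univ, F b := by
  rw [sum_double_count (PNE n) (AP n k) (powersetCard k univ)
    (fun b => b ×ˢ bᶜ) (fun p a => insert p.1 a) (fun p b => b.erase p.1) F]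
  · rw [Finset.mul_sum]
    refine Finset.sum_congr rfl fun b hb => ?_
    rw [mem_powersetCard] at hb
    rw [card_product, card_compl, hb.2, Fintype.card_fin]
  · intro p _ a ha
    rw [mem_AP] at ha
    refine mem_powersetCard.mpr ⟨subset_univ _, ?_⟩
    rw [card_insert_of_notMem ha.1.1, ha.2]
    omega
  · intro p hp a ha
    rw [mem_AP] at ha
    simp only [PNE, mem_filter, mem_univ, true_and] at hp
    refine mem_product.mpr ⟨mem_insert_self _ _, mem_compl.mpr ?_⟩
    simp only [mem_insert]
    push_neg
    exact ⟨fun h' => hp h'.symm, ha.1.2⟩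
  · intro b _ p hp
    rw [mem_product] at hp
    simp only [PNE, mem_filter, mem_univ, true_and]
    intro h'
    exact (mem_compl.mp hp.2) (h' ▸ hp.1)
  · intro b hb p hp
    rw [mem_product] at hp
    rw [mem_powersetCard] at hb
    refine mem_AP.mpr ⟨⟨notMem_erase _ _, fun h' => (mem_compl.mp hp.2) (mem_of_mem_erase h')⟩, ?_⟩
    rw [card_erase_of_mem hp.1, hb.2]
  · intro p _ a ha
    rw [mem_AP] at ha
    exact erase_insert ha.1.1
  · intro b _ p hp
    rw [mem_product] at hp
    exact insert_erase hp.1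

lemma countC2 (hk : 1 ≤ k) (hkn : k ≤ n) :
    ∑ p ∈ PNE n, ∑ a ∈ AP n k p, F (insert p.2 a)
      = (((n - k) * k : ℕ) : ℝ) * ∑ b ∈ powersetCard k univ, F b := by
  rw [sum_double_count (PNE n) (AP n k) (powersetCard k univ)
    (fun b => bᶜ ×ˢ b) (fun p a => insert p.2 a) (fun p b => b.erase p.2) F]
  · rw [Finset.mul_sum]
    refine Finset.sum_congr rfl fun b hb => ?_
    rw [mem_powersetCard] at hb
    rw [card_product, card_compl, hb.2, Fintype.card_fin]
  · intro p _ a ha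
    rw [mem_AP] at ha
    refine mem_powersetCard.mpr ⟨subset_univ _, ?_⟩
    rw [card_insert_of_notMem ha.1.2, ha.2]
    omega
  · intro p hp a ha
    rw [mem_AP] at ha
    simp only [PNE, mem_filter, mem_univ, true_and] at hp
    refine mem_product.mpr ⟨mem_compl.mpr ?_, mem_insert_self _ _⟩
    simp only [mem_insert]
    push_neg
    exact ⟨hp, ha.1.1⟩
  · intro b _ p hp
    rw [mem_product] at hp
    simp only [PNE, mem_filter, mem_univ, true_and]
    intro h'
    exact (mem_compl.mp hp.1) (h' ▸ hp.2)
  · intro b hb p hp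
    rw [mem_product] at hp
    rw [mem_powersetCard] at hb
    refine mem_AP.mpr ⟨⟨fun h' => (mem_compl.mp hp.1) (mem_of_mem_erase h'), notMem_erase _ _⟩, ?_⟩
    rw [card_erase_of_mem hp.2, hb.2]
  · intro p _ a ha
    rw [mem_AP] at ha
    exact erase_insert ha.1.2
  · intro b _ p hp
    rw [mem_product] at hp
    exact insert_erase hp.2

end Counting

lemma rE_eq {n : ℕ} {S : Type*} [Fintype S] (μ : Measure Ω) (X : Fin n → Ω → S) (k : ℕ) :
    rE μ X k = ((n.choose k : ℝ))⁻¹ * ∑ b ∈ powersetCard k univ, ent μ (restr X b) := by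
  rw [rE, powersetCard_eq_filter]

lemma cmi_symm {n : ℕ} {S : Type*} [Fintype S] (μ : Measure Ω)
    (X : Fin n → Ω → S) {i j : Fin n} {a : Finset (Fin n)} (hij : i ≠ j)
    (hi : i ∉ a) (hj : j ∉ a) :
    cmi μ (X j) (X i) (restr X a) = cmi μ (X i) (X j) (restr X a) := by
  rw [cmi_restr_eq μ X hij.symm hj hi, cmi_restr_eq μ X hij hi hj,
    Finset.insert_comm]
  ring

lemma uI_eq {n : ℕ} {S : Type*} [Fintype S] (μ : Measure Ω) (X : Fin n → Ω → S)
    {k : ℕ} (hk1 : 1 ≤ k) (hk2 : k + 1 ≤ n) :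
    uI μ X k = 2 * rE μ X k - rE μ X (k - 1) - rE μ X (k + 1) := by
  have hkn : k ≤ n := by omega
  set Sm : ℕ → ℝ := fun m => ∑ b ∈ powersetCard m univ, ent μ (restr X b) with hSm
  -- the sum over unordered pairs
  set f : Fin n × Fin n → ℝ :=
    fun p => ∑ a ∈ AP n k p, cmi μ (X p.1) (X p.2) (restr X a) with hf
  have hsymm : ∀ p, f p.swap = f p := by
    intro p
    by_cases hij : p.1 = p.2
    · have hps : p.swap = p := by
        ext <;> simp [hij]
      rw [hps]
    · have hAP : AP n k p.swap = AP n k p := by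
        ext a
        rw [mem_AP, mem_AP]
        exact and_congr_left' and_comm
      rw [hf]
      simp only [Prod.fst_swap, Prod.snd_swap, hAP]
      refine Finset.sum_congr rfl fun a ha => ?_
      rw [mem_AP] at ha
      exact cmi_symm μ X hij ha.1.1 ha.1.2
  have hPNE : ∑ p ∈ PNE n, f p
      = ((k * (n - k) : ℕ) : ℝ) * Sm k + (((n - k) * k : ℕ) : ℝ) * Sm k
        - (((k + 1) * k : ℕ) : ℝ) * Sm (k + 1)
        - (((n - k + 1) * (n - k) : ℕ) : ℝ) * Sm (k - 1) := by
    have hexp : ∑ p ∈ PNE n, f p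
        = ∑ p ∈ PNE n, ∑ a ∈ AP n k p,
            (ent μ (restr X (insert p.1 a)) + ent μ (restr X (insert p.2 a))
              - ent μ (restr X (insert p.1 (insert p.2 a))) - ent μ (restr X a)) := by
      refine Finset.sum_congr rfl fun p hp => ?_
      simp only [PNE, mem_filter, mem_univ, true_and] at hp
      refine Finset.sum_congr rfl fun a ha => ?_
      rw [mem_AP] at ha
      exact cmi_restr_eq μ X hp ha.1.1 ha.1.2
    rw [hexp]
    have : ∀ p ∈ PNE n, ∑ a ∈ AP n k p,
        (ent μ (restr X (insert p.1 a)) + ent μ (restr X (insert p.2 a))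
          - ent μ (restr X (insert p.1 (insert p.2 a))) - ent μ (restr X a))
        = ((∑ a ∈ AP n k p, ent μ (restr X (insert p.1 a)))
            + ∑ a ∈ AP n k p, ent μ (restr X (insert p.2 a)))
          - (∑ a ∈ AP n k p, ent μ (restr X (insert p.1 (insert p.2 a))))
          - ∑ a ∈ AP n k p, ent μ (restr X a) := by
      intro p _
      rw [← Finset.sum_add_distrib, ← Finset.sum_sub_distrib, ← Finset.sum_sub_distrib]
    rw [Finset.sum_congr rfl this, Finset.sum_sub_distrib, Finset.sum_sub_distrib,
      Finset.sum_add_distrib,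
      countA (fun b => ent μ (restr X b)) hk1 hkn,
      countB (fun b => ent μ (restr X b)) hk1 hk2,
      countC1 (fun b => ent μ (restr X b)) hk1 hkn,
      countC2 (fun b => ent μ (restr X b)) hk1 hkn]
  -- arithmetic finish
  have hhalf := sum_PLT_of_symm f hsymm
  have htwo : 2 * (k+1).choose 2 = (k+1) * k := by
    have := two_mul_choose_two (k+1)
    simpa using this
  set d : ℕ := n.choose (k+1) * ((k+1)*k) with hd
  have hcd : ((n.choose (k + 1) : ℝ) * ((k + 1).choose 2 : ℝ)) * 2 = (d:ℝ) := by
    rw [hd]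
    push_cast [← htwo]
    ring
  have hd1 : d = n.choose k * ((n - k) * k) := by
    rw [hd, show n.choose (k+1) * ((k+1)*k) = (n.choose (k+1) * (k+1)) * k by ring,
      Nat.choose_succ_right_eq]
    ring
  have hd2 : d = n.choose (k-1) * ((n - k + 1) * (n - k)) := by
    have hk' : k - 1 + 1 = k := by omega
    have h2 := Nat.choose_succ_right_eq n (k-1)
    rw [hk'] at h2
    have h3 : n - (k - 1) = n - k + 1 := by omega
    rw [h3] at h2
    calc d = (n.choose k * k) * (n - k) := by rw [hd1]; ring
    _ = (n.choose (k-1) * (n - k + 1)) * (n - k) := by rw [h2]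
    _ = _ := by ring
  have hck : (n.choose k : ℝ) ≠ 0 :=
    Nat.cast_ne_zero.mpr (Nat.choose_pos hkn).ne'
  have hck1 : (n.choose (k+1) : ℝ) ≠ 0 :=
    Nat.cast_ne_zero.mpr (Nat.choose_pos hk2).ne'
  have hckm : (n.choose (k-1) : ℝ) ≠ 0 :=
    Nat.cast_ne_zero.mpr (Nat.choose_pos (by omega)).ne'
  have hy1 : (((n - k) * k : ℕ) : ℝ) ≠ 0 :=
    Nat.cast_ne_zero.mpr (Nat.mul_pos (by omega) (by omega)).ne'
  have hy2 : (((k + 1) * k : ℕ) : ℝ) ≠ 0 :=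
    Nat.cast_ne_zero.mpr (Nat.mul_pos (by omega) (by omega)).ne'
  have hy3 : (((n - k + 1) * (n - k) : ℕ) : ℝ) ≠ 0 :=
    Nat.cast_ne_zero.mpr (Nat.mul_pos (by omega) (by omega)).ne'
  have hd0 : (d : ℝ) ≠ 0 := by
    rw [hd]
    push_cast
    exact mul_ne_zero hck1 (by exact_mod_cast hy2)
  -- uI in terms of the PNE sum
  have huI : uI μ X k = (d:ℝ)⁻¹ * ∑ p ∈ PNE n, f p := by
    rw [uI]
    have hbridge : (∑ p ∈ univ.filter (fun p : Fin n × Fin n => p.1 < p.2),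
        ∑ a ∈ (univ \ ({p.1, p.2} : Finset (Fin n))).powerset.filter
          (fun a : Finset (Fin n) => a.card = k - 1),
        cmi μ (X p.1) (X p.2) (restr X a)) = ∑ p ∈ PLT n, f p := rfl
    rw [hbridge, ← hhalf]
    rw [show ((n.choose (k + 1) : ℝ) * ((k + 1).choose 2 : ℝ))
        = (d:ℝ) / 2 by rw [← hcd]; ring]
    field_simp
  have E1 : (d:ℝ)⁻¹ * (((k * (n - k) : ℕ) : ℝ) + (((n - k) * k : ℕ) : ℝ))
      = 2 * ((n.choose k : ℝ))⁻¹ := by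
    have hmc : ((k * (n - k) : ℕ) : ℝ) = (((n - k) * k : ℕ) : ℝ) := by
      rw [Nat.mul_comm]
    rw [hmc, show (d:ℝ) = (n.choose k : ℝ) * (((n - k) * k : ℕ) : ℝ) by
      rw [hd1]; push_cast; ring]
    generalize hY : (((n - k) * k : ℕ) : ℝ) = y at hy1 ⊢
    generalize hXX : (n.choose k : ℝ) = x at hck ⊢
    field_simp
    ring
  have E2 : (d:ℝ)⁻¹ * (((k + 1) * k : ℕ) : ℝ) = ((n.choose (k+1) : ℝ))⁻¹ := by
    rw [show (d:ℝ) = (n.choose (k+1) : ℝ) * (((k + 1) * k : ℕ) : ℝ) by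
      rw [hd]; push_cast; ring]
    field_simp
  have E3 : (d:ℝ)⁻¹ * (((n - k + 1) * (n - k) : ℕ) : ℝ)
      = ((n.choose (k-1) : ℝ))⁻¹ := by
    rw [show (d:ℝ) = (n.choose (k-1) : ℝ) * (((n - k + 1) * (n - k) : ℕ) : ℝ) by
      rw [hd2]; push_cast; ring]
    generalize hY : (((n - k + 1) * (n - k) : ℕ) : ℝ) = y at hy3 ⊢
    generalize hXX : (n.choose (k - 1) : ℝ) = x at hckm ⊢
    field_simp
  rw [huI, hPNE, rE_eq, rE_eq, rE_eq]
  simp only [hSm]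
  linear_combination (∑ b ∈ powersetCard k univ, ent μ (restr X b)) * E1
    - (∑ b ∈ powersetCard (k+1) univ, ent μ (restr X b)) * E2
    - (∑ b ∈ powersetCard (k-1) univ, ent μ (restr X b)) * E3

lemma rE_zero {n : ℕ} {S : Type*} [Fintype S] (μ : Measure Ω) [IsProbabilityMeasure μ]
    (X : Fin n → Ω → S) : rE μ X 0 = 0 := by
  rw [rE_eq, Finset.powersetCard_zero, Finset.sum_singleton]
  have hie : IsEmpty (↥(∅ : Finset (Fin n))) := ⟨fun x => absurd x.2 (notMem_empty _)⟩
  have : ent μ (restr X (∅ : Finset (Fin n))) = 0 := by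
    unfold ent
    haveI := hie
    rw [Fintype.sum_unique]
    have hpre : (restr X (∅ : Finset (Fin n))) ⁻¹' {default} = Set.univ := by
      ext ω
      simp [Subsingleton.elim (restr X ∅ ω) default]
    rw [hpre]
    simp [Real.negMulLog_one]
  rw [this]
  simp

def singleEquiv {n : ℕ} (S : Type*) (j : Fin n) :
    (↥({j} : Finset (Fin n)) → S) ≃ S where
  toFun f := f ⟨j, mem_singleton_self j⟩
  invFun s := fun _ => s
  left_inv f := by
    funext i
    have hi : i = ⟨j, mem_singleton_self j⟩ := Subtype.ext (mem_singleton.mp i.2)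
    rw [hi]
  right_inv s := rfl

lemma ent_single {n : ℕ} {S : Type*} [Fintype S] (μ : Measure Ω)
    (X : Fin n → Ω → S) (j : Fin n) :
    ent μ (restr X ({j} : Finset (Fin n))) = ent μ (X j) := by
  have h : (fun ω => singleEquiv S j (restr X ({j} : Finset (Fin n)) ω)) = X j := rfl
  rw [← ent_comp_equiv μ (singleEquiv S j) (restr X ({j} : Finset (Fin n))), h]

lemma sum_ent_eq {n : ℕ} {S : Type*} [Fintype S] (μ : Measure Ω)
    (X : Fin n → Ω → S) (hn : 1 ≤ n) :
    ∑ j : Fin n, ent μ (X j) = (n : ℝ) * rE μ X 1 := by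
  rw [rE_eq, Finset.powersetCard_one, Finset.sum_map, Nat.choose_one_right]
  simp only [Function.Embedding.coeFn_mk]
  have hne : (n : ℝ) ≠ 0 := Nat.cast_ne_zero.mpr (by omega)
  rw [← mul_assoc, mul_inv_cancel₀ hne, one_mul]
  exact Finset.sum_congr rfl fun j _ => (ent_single μ X j).symm

lemma rE_top {n : ℕ} {S : Type*} [Fintype S] (μ : Measure Ω)
    (X : Fin n → Ω → S) : rE μ X n = ent μ (restr X univ) := by
  rw [rE_eq]
  have h1 : powersetCard n (univ : Finset (Fin n)) = {univ} := by
    have := Finset.powersetCard_self (univ : Finset (Fin n))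
    rwa [card_univ, Fintype.card_fin] at this
  rw [h1, Finset.sum_singleton, Nat.choose_self]
  simp

lemma telescope_aux (n : ℕ) (r : ℕ → ℝ) :
    ∀ m : ℕ, ∑ k ∈ Finset.Icc 1 m, ((n : ℝ) - (k : ℝ)) * (2 * r k - r (k-1) - r (k+1))
      = (n : ℝ) * r 1 - ((n : ℝ) - 1) * r 0
        - ((n : ℝ) - (m : ℝ)) * r (m+1) + ((n : ℝ) - (m : ℝ) - 1) * r m := by
  intro m
  induction m with
  | zero =>
    rw [show Finset.Icc 1 0 = ∅ from rfl, Finset.sum_empty]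
    push_cast
    ring
  | succ m' ih =>
    rw [Finset.sum_Icc_succ_top (by omega), ih]
    push_cast
    ring


/-- `TC(X) = ∑_{k=1}^{n-1} (n-k) u_k(X)`. -/
theorem tc_decomposition {Ω S : Type*} [MeasurableSpace Ω]
    [Fintype S] [MeasurableSpace S] [MeasurableSingletonClass S]
    {n : ℕ} (hn : 2 ≤ n) (μ : Measure Ω) [IsProbabilityMeasure μ]
    (X : Fin n → Ω → S) (hX : ∀ i, Measurable (X i)) :
    (∑ j : Fin n, ent μ (X j)) - ent μ (restr X univ)
      = ∑ k ∈ Finset.Icc 1 (n - 1), ((n : ℝ) - (k : ℝ)) * uI μ X k := by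
  have h1 : ∀ k ∈ Finset.Icc 1 (n-1), ((n:ℝ) - (k:ℝ)) * uI μ X k
      = ((n:ℝ) - (k:ℝ)) * (2 * rE μ X k - rE μ X (k-1) - rE μ X (k+1)) := by
    intro k hk
    rw [Finset.mem_Icc] at hk
    rw [uI_eq μ X hk.1 (by omega)]
  rw [Finset.sum_congr rfl h1, telescope_aux n (rE μ X) (n-1), rE_zero μ X]
  have hm1 : n - 1 + 1 = n := by omega
  rw [hm1]
  have hc : ((n-1 : ℕ):ℝ) = (n:ℝ) - 1 := by
    push_cast [Nat.cast_sub (show 1 ≤ n by omega)]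
    ring
  rw [hc, sum_ent_eq μ X (by omega), ← rE_top μ X]
  ring
end
end

section
/- The O-information decomposes as Ω(X) = Σ_{k=1}^{n−1} (n−2k)·u_k(X). -/
open MeasureTheory Finset

noncomputable section

variable {Ω : Type*} [MeasurableSpace Ω]

/-!
Each conditional mutual information `I(X_i ; X_j | X^a)` is a second difference of subset
entropies, `H(X^{a ∪ i}) + H(X^{a ∪ j}) - H(X^{a ∪ {i,j}}) - H(X^a)`. Summing over pairs and
conditioning sets and counting how often each subset occurs gives
`u_k = 2 r_k - r_{k+1} - r_{k-1}`, where `r_k` is the average entropy of the `k`-subsets.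
Summation by parts then collapses `∑ (n - 2k) u_k` onto the boundary terms `r_0 = 0`, `r_1`,
`r_{n-1}` and `r_n`, which are the terms of `Ω(X)`.
-/

namespace Finset
variable {α M : Type*} [DecidableEq α] [AddCommMonoid M]

theorem sum_powersetCard_sdiff_comm (s : Finset α) (k l : ℕ) (f : Finset α → Finset α → M) :
    ∑ p ∈ s.powersetCard k, ∑ a ∈ (s \ p).powersetCard l, f p a
      = ∑ a ∈ s.powersetCard l, ∑ p ∈ (s \ a).powersetCard k, f p a :=
  sum_comm' fun p a => by
    simp only [mem_powersetCard, subset_sdiff, disjoint_comm (a := a)]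
    tauto

theorem sum_powersetCard_sdiff_eq_sum_powersetCard_add (s : Finset α) (k l : ℕ)
    (f : Finset α → Finset α → M) :
    ∑ p ∈ s.powersetCard k, ∑ a ∈ (s \ p).powersetCard l, f p a
      = ∑ b ∈ s.powersetCard (k + l), ∑ p ∈ b.powersetCard k, f p (b \ p) := by
  rw [sum_sigma', sum_sigma']
  refine sum_bij' (fun x _ => ⟨x.1 ∪ x.2, x.1⟩) (fun x _ => ⟨x.2, x.1 \ x.2⟩) ?_ ?_ ?_ ?_ ?_
  · rintro ⟨p, a⟩ h
    simp only [mem_sigma, mem_powersetCard, subset_sdiff] at h ⊢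
    obtain ⟨⟨hps, rfl⟩, ⟨has, hpa⟩, rfl⟩ := h
    exact ⟨⟨union_subset hps has, card_union_of_disjoint hpa.symm⟩, subset_union_left, rfl⟩
  · rintro ⟨b, p⟩ h
    simp only [mem_sigma, mem_powersetCard, subset_sdiff] at h ⊢
    obtain ⟨⟨hbs, hb⟩, hpb, rfl⟩ := h
    refine ⟨⟨hpb.trans hbs, rfl⟩, ⟨sdiff_subset.trans hbs, sdiff_disjoint⟩, ?_⟩
    rw [card_sdiff_of_subset hpb]; omega
  · rintro ⟨p, a⟩ h
    simp only [mem_sigma, mem_powersetCard, subset_sdiff] at h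
    simp [union_sdiff_cancel_left h.2.1.2.symm]
  · rintro ⟨b, p⟩ h
    simp only [mem_sigma, mem_powersetCard] at h
    simp [union_sdiff_of_subset h.2.1]
  · rintro ⟨p, a⟩ h
    simp only [mem_sigma, mem_powersetCard, subset_sdiff] at h
    simp [union_sdiff_cancel_left h.2.1.2.symm]

theorem sum_powersetCard_sdiff_union (s : Finset α) (k l : ℕ) (f : Finset α → M) :
    ∑ p ∈ s.powersetCard k, ∑ a ∈ (s \ p).powersetCard l, f (p ∪ a)
      = (k + l).choose k • ∑ b ∈ s.powersetCard (k + l), f b := by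
  rw [sum_powersetCard_sdiff_eq_sum_powersetCard_add, smul_sum]
  refine sum_congr rfl fun b hb => ?_
  rw [← (mem_powersetCard.mp hb).2, ← card_powersetCard, ← sum_const]
  exact sum_congr rfl fun p hp => by rw [union_sdiff_of_subset (mem_powersetCard.mp hp).1]

theorem sum_powersetCard_sdiff_left (s : Finset α) (k l : ℕ) (f : Finset α → M) :
    ∑ p ∈ s.powersetCard k, ∑ _a ∈ (s \ p).powersetCard l, f p
      = (#s - k).choose l • ∑ p ∈ s.powersetCard k, f p := by
  rw [smul_sum]
  refine sum_congr rfl fun p hp => ?_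
  obtain ⟨hps, rfl⟩ := mem_powersetCard.mp hp
  rw [sum_const, card_powersetCard, card_sdiff_of_subset hps]

theorem sum_powersetCard_sdiff_right (s : Finset α) (k l : ℕ) (f : Finset α → M) :
    ∑ p ∈ s.powersetCard k, ∑ a ∈ (s \ p).powersetCard l, f a
      = (#s - l).choose k • ∑ a ∈ s.powersetCard l, f a := by
  rw [sum_powersetCard_sdiff_comm, sum_powersetCard_sdiff_left]

theorem sum_powersetCard_one_pair_union {i j : α} (hij : i ≠ j) (a : Finset α)
    (f : Finset α → M) :
    ∑ q ∈ ({i, j} : Finset α).powersetCard 1, f (q ∪ a) = f (insert i a) + f (insert j a) := by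
  rw [powersetCard_one, sum_map, sum_pair hij]
  simp only [Function.Embedding.coeFn_mk, singleton_union]

theorem sum_powersetCard_two_sum_powersetCard_one (s : Finset α) (g : Finset α → M) :
    ∑ P ∈ s.powersetCard 2, ∑ q ∈ P.powersetCard 1, g q
      = (#s - 1) • ∑ q ∈ s.powersetCard 1, g q := by
  have := sum_powersetCard_sdiff_eq_sum_powersetCard_add s 1 1 fun q _ => g q
  rw [← this, sum_powersetCard_sdiff_left, Nat.choose_one_right]

theorem sum_powersetCard_two_sdiff_sum_powersetCard_one (s : Finset α) (m : ℕ)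
    (E : Finset α → M) :
    ∑ P ∈ s.powersetCard 2, ∑ a ∈ (s \ P).powersetCard m, ∑ q ∈ P.powersetCard 1, E (q ∪ a)
      = ((m + 1) * (#s - (m + 1))) • ∑ b ∈ s.powersetCard (m + 1), E b := by
  have inner : ∀ a ∈ s.powersetCard m, ∑ P ∈ (s \ a).powersetCard 2,
      ∑ q ∈ P.powersetCard 1, E (q ∪ a)
        = (#s - (m + 1)) • ∑ q ∈ (s \ a).powersetCard 1, E (q ∪ a) := by
    intro a ha
    obtain ⟨has, rfl⟩ := mem_powersetCard.mp ha
    rw [sum_powersetCard_two_sum_powersetCard_one, card_sdiff_of_subset has, Nat.sub_sub]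
  rw [sum_powersetCard_sdiff_comm, sum_congr rfl inner, ← smul_sum,
    ← sum_powersetCard_sdiff_comm, sum_powersetCard_sdiff_union, Nat.choose_one_right,
    add_comm 1 m, mul_comm, mul_smul]

theorem sum_powersetCard_two_sdiff_second_difference {M : Type*} [AddCommGroup M]
    (s : Finset α) (m : ℕ) (E : Finset α → M) :
    ∑ P ∈ s.powersetCard 2, ∑ a ∈ (s \ P).powersetCard m,
        (∑ q ∈ P.powersetCard 1, E (q ∪ a) - E (P ∪ a) - E a)
      = ((m + 1) * (#s - (m + 1))) • ∑ b ∈ s.powersetCard (m + 1), E b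
        - (m + 2).choose 2 • ∑ b ∈ s.powersetCard (m + 2), E b
        - (#s - m).choose 2 • ∑ b ∈ s.powersetCard m, E b := by
  simp only [sum_sub_distrib]
  rw [sum_powersetCard_two_sdiff_sum_powersetCard_one, sum_powersetCard_sdiff_union,
    sum_powersetCard_sdiff_right, add_comm 2 m]

theorem sum_filter_lt_eq_sum_powersetCard_two [LinearOrder α] [Fintype α]
    (f : Finset α → M) :
    ∑ p ∈ univ.filter (fun p : α × α => p.1 < p.2), f {p.1, p.2}
      = ∑ P ∈ univ.powersetCard 2, f P := by
  refine sum_nbij (fun p => {p.1, p.2}) (fun p hp => ?_) (fun p hp q hq hpq => ?_)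
    (fun P hP => ?_) fun _ _ => rfl
  · simp only [mem_filter, mem_univ, true_and] at hp
    simp [card_pair hp.ne]
  · simp only [coe_filter, mem_univ, true_and, Set.mem_ofPred_eq] at hp hq
    have hmem : ∀ x, x = p.1 ∨ x = p.2 ↔ x = q.1 ∨ x = q.2 := by
      simpa using Finset.ext_iff.mp hpq
    have := hmem p.1
    have := hmem p.2
    have := hmem q.1
    grind
  · obtain ⟨x, y, hxy, rfl⟩ := card_eq_two.mp (mem_powersetCard.mp hP).2
    rcases hxy.lt_or_gt with h | h
    · exact ⟨(x, y), by simpa using h, rfl⟩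
    · exact ⟨(y, x), by simpa using h, pair_comm y x⟩

theorem sum_powersetCard_univ_compl [Fintype α] {k : ℕ} (hk : k ≤ Fintype.card α)
    (f : Finset α → M) :
    ∑ b ∈ univ.powersetCard (Fintype.card α - k), f b = ∑ c ∈ univ.powersetCard k, f cᶜ := by
  refine (sum_nbij' compl compl (fun c hc => ?_) (fun b hb => ?_) (fun c _ => compl_compl c)
    (fun b _ => compl_compl b) fun _ _ => rfl).symm
  · simp_all [card_compl]
  · simp_all [card_compl]
    omega

end Finset

theorem sum_Ico_mul_second_difference (x : ℝ) (r : ℕ → ℝ) {N : ℕ} (hN : 1 ≤ N) :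
    ∑ k ∈ Ico 1 N, (x - 2 * k) * (2 * r k - r (k + 1) - r (k - 1))
      = x * r 1 - (x - 2) * r 0 - (x - 2 * N + 2) * r N + (x - 2 * N) * r (N - 1) := by
  induction N, hN using Nat.le_induction with
  | base => simp
  | succ N hN ih =>
    rw [sum_Ico_succ_top hN, ih, Nat.add_sub_cancel]
    push_cast
    ring

theorem Nat.choose_mul_choose_two (n m : ℕ) :
    n.choose (m + 2) * (m + 2).choose 2 = n.choose m * (n - m).choose 2 := by
  rw [← Nat.choose_symm_add, Nat.choose_mul (Nat.le_add_right m 2), Nat.add_sub_cancel_left]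

theorem Nat.two_mul_choose_mul_choose_two (n m : ℕ) :
    2 * (n.choose (m + 2) * (m + 2).choose 2) = n.choose (m + 1) * ((m + 1) * (n - (m + 1))) := by
  have h₁ := Nat.choose_mul (n := n) (Nat.le_succ (m + 1))
  have h₂ := Nat.add_one_mul_choose_eq (m + 1) 1
  rw [Nat.choose_succ_self_right, Nat.succ_sub le_rfl, Nat.sub_self,
    Nat.choose_one_right] at h₁
  rw [Nat.choose_one_right] at h₂
  nlinarith [h₁, h₂]

section Entropy
variable {α β : Type*} [Fintype α] [Fintype β]

theorem ent_comp_of_injective (μ : Measure Ω) (Z : Ω → α) {f : α → β} (hf : Function.Injective f) :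
    ent μ (f ∘ Z) = ent μ Z := by
  refine (Fintype.sum_of_injective f hf _ _ (fun z hz => ?_) fun z => ?_).symm
  · have : f ∘ Z ⁻¹' {z} = ∅ := Set.eq_empty_of_forall_notMem fun ω hω => hz ⟨Z ω, hω⟩
    simp [this]
  · rw [Set.preimage_comp, ← Set.image_singleton, hf.preimage_image]

variable {n : ℕ} {S : Type*}

def splitInsert (i : Fin n) (a : Finset (Fin n)) (g : {x // x ∈ insert i a} → S) :
    S × ({x // x ∈ a} → S) :=
  (g ⟨i, mem_insert_self i a⟩, fun x => g ⟨x, mem_insert_of_mem x.2⟩)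

theorem splitInsert_injective (i : Fin n) (a : Finset (Fin n)) :
    Function.Injective (splitInsert (S := S) i a) := by
  intro g₁ g₂ h
  funext ⟨x, hx⟩
  obtain rfl | hx := mem_insert.mp hx
  · exact congrArg Prod.fst h
  · exact congrFun (congrArg Prod.snd h) ⟨x, hx⟩

variable [Fintype S]

theorem ent_pair_restr (μ : Measure Ω) (X : Fin n → Ω → S) (i : Fin n) (a : Finset (Fin n)) :
    ent μ (fun ω => (X i ω, restr X a ω)) = ent μ (restr X (insert i a)) :=
  ent_comp_of_injective μ (restr X (insert i a)) (f := splitInsert i a)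
    (splitInsert_injective i a)

theorem ent_triple_restr (μ : Measure Ω) (X : Fin n → Ω → S) (i j : Fin n)
    (a : Finset (Fin n)) :
    ent μ (fun ω => (X i ω, X j ω, restr X a ω)) = ent μ (restr X (insert i (insert j a))) := by
  rw [← ent_pair_restr]
  exact ent_comp_of_injective μ (fun ω => (X i ω, restr X (insert j a) ω))
    (f := Prod.map id (splitInsert j a)) (Function.injective_id.prodMap (splitInsert_injective j a))

theorem cmi_restr (μ : Measure Ω) (X : Fin n → Ω → S) (i j : Fin n) (a : Finset (Fin n)) :
    cmi μ (X i) (X j) (restr X a)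
      = ent μ (restr X (insert i a)) + ent μ (restr X (insert j a))
        - ent μ (restr X (insert i (insert j a))) - ent μ (restr X a) := by
  rw [cmi, ent_pair_restr, ent_pair_restr, ent_triple_restr]

end Entropy

section Averages
variable {n : ℕ} {S : Type*} [Fintype S]

theorem rE_eq_sum_powersetCard (μ : Measure Ω) (X : Fin n → Ω → S) (k : ℕ) :
    rE μ X k = (n.choose k : ℝ)⁻¹ * ∑ a ∈ univ.powersetCard k, ent μ (restr X a) := by
  rw [rE, powersetCard_eq_filter]

theorem cmi_restr_eq_sum_powersetCard_one (μ : Measure Ω) (X : Fin n → Ω → S) {i j : Fin n}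
    (hij : i ≠ j) (a : Finset (Fin n)) :
    cmi μ (X i) (X j) (restr X a)
      = ∑ q ∈ ({i, j} : Finset (Fin n)).powersetCard 1, ent μ (restr X (q ∪ a))
        - ent μ (restr X ({i, j} ∪ a)) - ent μ (restr X a) := by
  have key : ∀ f : Finset (Fin n) → ℝ,
      f (insert i a) + f (insert j a) - f (insert i (insert j a)) - f a
        = ∑ q ∈ ({i, j} : Finset (Fin n)).powersetCard 1, f (q ∪ a) - f ({i, j} ∪ a) - f a := by
    intro f
    rw [sum_powersetCard_one_pair_union hij, insert_union, singleton_union]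
  exact (cmi_restr μ X i j a).trans (key fun b => ent μ (restr X b))

theorem uI_eq_rE (μ : Measure Ω) (X : Fin n → Ω → S) {k : ℕ} (hk : 1 ≤ k) (hkn : k + 1 ≤ n) :
    uI μ X k = 2 * rE μ X k - rE μ X (k + 1) - rE μ X (k - 1) := by
  obtain ⟨m, rfl⟩ : ∃ m, k = m + 1 := ⟨k - 1, by omega⟩
  have hsum := sum_powersetCard_two_sdiff_second_difference univ m fun b => ent μ (restr X b)
  rw [← sum_filter_lt_eq_sum_powersetCard_two] at hsum
  simp only [card_univ, Fintype.card_fin, nsmul_eq_mul] at hsum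
  rw [uI, Nat.add_sub_cancel, sum_congr rfl fun p hp => sum_congr powersetCard_eq_filter.symm
    fun a _ => cmi_restr_eq_sum_powersetCard_one μ X (mem_filter.mp hp).2.ne a, hsum]
  simp only [rE_eq_sum_powersetCard]
  have h₁ : (n.choose (m + 2) * (m + 2).choose 2 : ℝ) = n.choose m * (n - m).choose 2 := by
    exact_mod_cast Nat.choose_mul_choose_two n m
  have h₂ : (2 * (n.choose (m + 2) * (m + 2).choose 2) : ℝ)
      = n.choose (m + 1) * ((m + 1) * (n - (m + 1)) : ℕ) := by
    exact_mod_cast Nat.two_mul_choose_mul_choose_two n m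
  have hpos : ∀ j ≤ n, (n.choose j : ℝ) ≠ 0 := fun j hj => by
    exact_mod_cast (Nat.choose_pos hj).ne'
  have hpos₂ : ((m + 2).choose 2 : ℝ) ≠ 0 := by exact_mod_cast (Nat.choose_pos (by omega)).ne'
  field_simp [hpos m (by omega), hpos (m + 1) (by omega), hpos (m + 2) (by omega), hpos₂]
  rw [show m + 1 + 1 = m + 2 from rfl]
  linear_combination
    (-(∑ b ∈ univ.powersetCard (m + 1), ent μ (restr X b)) * n.choose m) * h₂
      + ((∑ b ∈ univ.powersetCard m, ent μ (restr X b)) * n.choose (m + 1)) * h₁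

end Averages

section Boundary
variable {n : ℕ} {S : Type*} [Fintype S] (μ : Measure Ω) (X : Fin n → Ω → S)

theorem ent_restr_empty [IsProbabilityMeasure μ] : ent μ (restr X ∅) = 0 := by
  have hpre : ∀ z, restr X ∅ ⁻¹' {z} = Set.univ :=
    fun z => Set.eq_univ_of_forall fun ω => Subsingleton.elim _ _
  simp [ent, hpre]

theorem ent_restr_singleton (i : Fin n) : ent μ (restr X {i}) = ent μ (X i) := by
  refine (ent_comp_of_injective μ (restr X {i}) (f := fun g => g ⟨i, mem_singleton_self i⟩)
    fun g₁ g₂ h => funext fun ⟨x, hx⟩ => ?_).symm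
  obtain rfl := mem_singleton.mp hx
  exact h

theorem rE_zero_s7 [IsProbabilityMeasure μ] : rE μ X 0 = 0 := by
  rw [rE_eq_sum_powersetCard, powersetCard_zero, sum_singleton, ent_restr_empty, mul_zero]

theorem rE_self : rE μ X n = ent μ (restr X univ) := by
  have h := powersetCard_self (univ : Finset (Fin n))
  rw [card_fin] at h
  rw [rE_eq_sum_powersetCard, h, sum_singleton, Nat.choose_self, Nat.cast_one, inv_one, one_mul]

theorem natCast_mul_rE_one (hn : 0 < n) : n * rE μ X 1 = ∑ j, ent μ (X j) := by
  rw [rE_eq_sum_powersetCard, Nat.choose_one_right,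
    mul_inv_cancel_left₀ (by positivity), powersetCard_one, sum_map]
  exact sum_congr rfl fun j _ => ent_restr_singleton μ X j

theorem natCast_mul_rE_sub_one (hn : 0 < n) :
    n * rE μ X (n - 1) = ∑ j, ent μ (restr X ({j} : Finset (Fin n))ᶜ) := by
  have h := sum_powersetCard_univ_compl (k := 1) (by rw [Fintype.card_fin]; exact hn)
    fun b => ent μ (restr X b)
  rw [Fintype.card_fin, powersetCard_one, sum_map] at h
  rw [rE_eq_sum_powersetCard, Nat.choose_symm hn, Nat.choose_one_right,
    mul_inv_cancel_left₀ (by positivity), h]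
  rfl

end Boundary

theorem oinfo_decomposition_general {Ω S : Type*} [MeasurableSpace Ω]
    [Fintype S]
    {n : ℕ} (hn : 2 ≤ n) (μ : Measure Ω) [IsProbabilityMeasure μ]
    (X : Fin n → Ω → S) :
    ((n : ℝ) - 2) * ent μ (restr X univ)
        + ∑ j : Fin n, (ent μ (X j) - ent μ (restr X ({j} : Finset (Fin n))ᶜ))
      = ∑ k ∈ Finset.Icc 1 (n - 1), ((n : ℝ) - 2 * (k : ℝ)) * uI μ X k := by
  have hn₀ : 0 < n := by omega
  have hIcc : Icc 1 (n - 1) = Ico 1 n := by ext k; simp; omega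
  calc _ = (n - 2) * rE μ X n + n * rE μ X 1 - n * rE μ X (n - 1) - (n - 2) * rE μ X 0 := by
        rw [rE_zero_s7, rE_self, sum_sub_distrib, natCast_mul_rE_one μ X hn₀,
          natCast_mul_rE_sub_one μ X hn₀]
        ring
    _ = ∑ k ∈ Icc 1 (n - 1), (n - 2 * k) * (2 * rE μ X k - rE μ X (k + 1) - rE μ X (k - 1)) := by
        rw [hIcc, sum_Ico_mul_second_difference _ _ hn₀]
        ring
    _ = _ := sum_congr rfl fun k hk => by
        obtain ⟨hk₁, hk₂⟩ := mem_Icc.mp hk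
        rw [uI_eq_rE μ X hk₁ (by omega)]

/-- `Ω(X) = ∑_{k=1}^{n-1} (n-2k) u_k(X)`. -/
theorem oinfo_decomposition {Ω S : Type*} [MeasurableSpace Ω]
    [Fintype S] [MeasurableSpace S] [MeasurableSingletonClass S]
    {n : ℕ} (hn : 2 ≤ n) (μ : Measure Ω) [IsProbabilityMeasure μ]
    (X : Fin n → Ω → S) (hX : ∀ i, Measurable (X i)) :
    ((n : ℝ) - 2) * ent μ (restr X univ)
        + ∑ j : Fin n, (ent μ (X j) - ent μ (restr X ({j} : Finset (Fin n))ᶜ))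
      = ∑ k ∈ Finset.Icc 1 (n - 1), ((n : ℝ) - 2 * (k : ℝ)) * uI μ X k :=
  oinfo_decomposition_general hn μ X
end
end
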